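/- arXiv:2302.07174 — 5 statements merged into one kernel-verified Lean document; each statement's English description precedes it below -/
import Mathlib

section
/- Let S be a submonoid of a group G that generates G as a group. If {F_i}_{i∈I} is a right Følner net for S, then {F_i}_{i∈I} is also a right Følner net for G. -/
open Filter

/-- Let `S` be a submonoid of a group `G` that generates `G` as a group. If `{F i}` is a right
Følner net for `S` (a net of nonempty finite subsets of `S` with `|F i * s \ F i|/|F i| → 0`
for every `s ∈ S`), then `{F i}` is also a right Følner net for `G`, i.e. the same condition
holds for every `g ∈ G`. -/
theorem stmt4 {G : Type*} [Group G] [DecidableEq G] {I : Type*} [Preorder I]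
    [IsDirected I (· ≤ ·)] [Nonempty I]
    (S : Submonoid G) (hgen : Subgroup.closure (S : Set G) = ⊤)
    (F : I → Finset G) (hFS : ∀ i, (F i : Set G) ⊆ (S : Set G)) (hne : ∀ i, (F i).Nonempty)
    (hFol : ∀ s ∈ S, Tendsto
      (fun i => ((((F i).image (· * s)) \ F i).card : ℝ) / ((F i).card : ℝ)) atTop (nhds 0)) :
    ∀ g : G, Tendsto
      (fun i => ((((F i).image (· * g)) \ F i).card : ℝ) / ((F i).card : ℝ)) atTop (nhds 0) := by
  set D : G → I → ℝ := fun g i => ((((F i).image (· * g)) \ F i).card : ℝ) / ((F i).card : ℝ)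
    with hD
  have hpos : ∀ i, (0 : ℝ) < ((F i).card : ℝ) := fun i => by
    exact_mod_cast Finset.card_pos.mpr (hne i)
  have hnonneg : ∀ g i, 0 ≤ D g i := fun g i =>
    div_nonneg (by positivity) (le_of_lt (hpos i))
  -- symmetry: swapped difference has the same cardinality
  have hcard : ∀ (A : Finset G) (g : G),
      ((A.image (· * g)) \ A).card = (A \ A.image (· * g)).card := by
    intro A g
    exact Finset.card_sdiff_comm (Finset.card_image_of_injective A (mul_left_injective g))
  -- inverse
  have hinv : ∀ g, (∀ i, D g⁻¹ i = D g i) := by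
    intro g i
    have key : ((F i).image (· * g⁻¹)) \ F i
        = ((F i) \ (F i).image (· * g)).image (· * g⁻¹) := by
      rw [Finset.image_sdiff _ _ (mul_left_injective g⁻¹), Finset.image_image]
      congr 1
      have : ((· * g⁻¹) ∘ (· * g)) = id := by
        funext x; simp
      rw [this, Finset.image_id]
    have : (((F i).image (· * g⁻¹)) \ F i).card = (((F i).image (· * g)) \ F i).card := by
      rw [key, Finset.card_image_of_injective _ (mul_left_injective g⁻¹), ← hcard]
    simp only [hD, this]
  -- product: subadditivity of defect
  have hmulcard : ∀ (a b : G) (i : I),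
      (((F i).image (· * (a * b))) \ F i).card
        ≤ (((F i).image (· * a)) \ F i).card + (((F i).image (· * b)) \ F i).card := by
    intro a b i
    have hsub : ((F i).image (· * (a * b))) \ F i
        ⊆ ((((F i).image (· * a)) \ F i).image (· * b)) ∪ (((F i).image (· * b)) \ F i) := by
      intro x hx
      rcases Finset.mem_sdiff.mp hx with ⟨hx1, hx2⟩
      rcases Finset.mem_image.mp hx1 with ⟨y, hy, rfl⟩
      by_cases hya : y * a ∈ F i
      · apply Finset.mem_union_right
        refine Finset.mem_sdiff.mpr ⟨?_, by simpa [mul_assoc] using hx2⟩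
        exact Finset.mem_image.mpr ⟨y * a, hya, by simp [mul_assoc]⟩
      · apply Finset.mem_union_left
        refine Finset.mem_image.mpr ⟨y * a, ?_, by simp [mul_assoc]⟩
        exact Finset.mem_sdiff.mpr ⟨Finset.mem_image.mpr ⟨y, hy, rfl⟩, hya⟩
    calc (((F i).image (· * (a * b))) \ F i).card
        ≤ (((((F i).image (· * a)) \ F i).image (· * b)) ∪ (((F i).image (· * b)) \ F i)).card :=
          Finset.card_le_card hsub
      _ ≤ ((((F i).image (· * a)) \ F i).image (· * b)).card
            + (((F i).image (· * b)) \ F i).card := Finset.card_union_le _ _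
      _ = (((F i).image (· * a)) \ F i).card + (((F i).image (· * b)) \ F i).card := by
          rw [Finset.card_image_of_injective _ (mul_left_injective b)]
  have hmul : ∀ (a b : G) (i : I), D (a * b) i ≤ D a i + D b i := by
    intro a b i
    have := hmulcard a b i
    rw [hD]
    simp only []
    rw [← add_div]
    apply div_le_div_of_nonneg_right _ (hpos i).le
    exact_mod_cast this
  have hmul' : ∀ (a b : G) (i : I), D (a * b) i ≤ D a i + D b i := hmul
  -- membership in closure
  have key : ∀ g : G, Tendsto (D g) atTop (nhds 0) := by
    intro g
    have hg : g ∈ Subgroup.closure (S : Set G) := by rw [hgen]; trivial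
    induction hg using Subgroup.closure_induction with
    | mem x hx => exact hFol x hx
    | one =>
        have : D 1 = fun _ => 0 := by
          funext i
          simp only [hD, mul_one, Finset.image_id', Finset.sdiff_self, Finset.card_empty,
            Nat.cast_zero, zero_div]
        rw [this]; exact tendsto_const_nhds
    | mul x y _ _ hx hy =>
        have hb : Tendsto (fun i => D x i + D y i) atTop (nhds 0) := by
          simpa using hx.add hy
        exact squeeze_zero (hnonneg _) (fun i => hmul x y i) hb
    | inv x _ hx =>
        have : D x⁻¹ = D x := funext (hinv x)
        rw [this]; exact hx
  exact key
end

section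
/- Let S be a monoid acting on the left on an abelian group X by endomorphisms λ, such that Ker(λ) = ⋃_{s∈S} Ker(λ_s), with S left Ore. For each finite subset F of X there is an s ∈ S such that for all x, y ∈ F, if x − y ∈ Ker(λ) then λ_s(x) = λ_s(y). In particular, |λ_s(F)| ≤ |π(F)| where π: X → X/Ker(λ) is the projection. -/
private theorem stmt7_aux {S X : Type*} [Monoid S] [AddCommGroup X]
    (hOre : ∀ s t : S, ∃ a b : S, a * s = b * t)
    (lam : S → (X →+ X))
    (hlammul : ∀ s t : S, lam (s * t) = (lam s).comp (lam t))
    (G : Finset X) (hG : ∀ d ∈ G, ∃ t : S, lam t d = 0) :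
    ∃ s : S, ∀ d ∈ G, lam s d = 0 := by
  classical
  induction G using Finset.induction with
  | empty => exact ⟨1, by simp⟩
  | insert _ _ hnot ih =>
    rename_i d G'
    obtain ⟨s, hs⟩ := ih (fun x hx => hG x (Finset.mem_insert_of_mem hx))
    obtain ⟨t, ht⟩ := hG d (Finset.mem_insert_self d G')
    obtain ⟨a, b, hab⟩ := hOre t s
    refine ⟨a * t, ?_⟩
    intro x hx
    rcases Finset.mem_insert.mp hx with h | h
    · subst h
      rw [hlammul]
      simp [ht]
    · rw [hab, hlammul]
      simp [hs x h]

/-- Let `S` be a left Ore monoid acting on the left on an abelian group `X` by endomorphisms,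
with `K = Ker(λ) = ⋃_{s ∈ S} Ker(λ_s)`. For each finite subset `F` of `X` there is `s ∈ S`
such that for all `x, y ∈ F`, if `x - y ∈ Ker(λ)` then `λ_s x = λ_s y`. In particular,
`|λ_s(F)| ≤ |π(F)|`, where `π : X → X / Ker(λ)` is the projection. -/
theorem stmt7 {S X : Type*} [Monoid S] [AddCommGroup X]
    (hOre : ∀ s t : S, ∃ a b : S, a * s = b * t)
    (lam : S → (X →+ X)) (hlam1 : lam 1 = AddMonoidHom.id X)
    (hlammul : ∀ s t : S, lam (s * t) = (lam s).comp (lam t))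
    (K : AddSubgroup X) (hK : (K : Set X) = {x : X | ∃ s : S, lam s x = 0})
    (F : Finset X) :
    ∃ s : S, (∀ x ∈ F, ∀ y ∈ F, x - y ∈ K → lam s x = lam s y) ∧
      ((lam s) '' (F : Set X)).ncard ≤
        ((QuotientAddGroup.mk : X → X ⧸ K) '' (F : Set X)).ncard := by
  classical
  set G : Finset X := ((F ×ˢ F).image (fun p => p.1 - p.2)).filter (· ∈ K) with hGdef
  have hGmem : ∀ d ∈ G, ∃ t : S, lam t d = 0 := by
    intro d hd
    have hdK : d ∈ K := (Finset.mem_filter.mp hd).2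
    have : d ∈ (K : Set X) := hdK
    rw [hK] at this
    exact this
  obtain ⟨s, hs⟩ := stmt7_aux hOre lam hlammul G hGmem
  have key : ∀ x ∈ F, ∀ y ∈ F, x - y ∈ K → lam s x = lam s y := by
    intro x hx y hy hxy
    have hdG : x - y ∈ G := by
      refine Finset.mem_filter.mpr ⟨?_, hxy⟩
      exact Finset.mem_image.mpr ⟨(x, y), Finset.mem_product.mpr ⟨hx, hy⟩, rfl⟩
    have := hs _ hdG
    rw [map_sub, sub_eq_zero] at this
    exact this
  refine ⟨s, key, ?_⟩
  set π : X → X ⧸ K := QuotientAddGroup.mk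
  set g : X ⧸ K → X := fun q => lam s (Function.invFunOn π (F : Set X) q) with hg
  have hsub : (lam s) '' (F : Set X) ⊆ g '' (π '' (F : Set X)) := by
    rintro _ ⟨x, hx, rfl⟩
    refine ⟨π x, ⟨x, hx, rfl⟩, ?_⟩
    have hex : ∃ y ∈ (F : Set X), π y = π x := ⟨x, hx, rfl⟩
    have h1 : Function.invFunOn π (F : Set X) (π x) ∈ (F : Set X) :=
      Function.invFunOn_mem hex
    have h2 : π (Function.invFunOn π (F : Set X) (π x)) = π x :=
      Function.invFunOn_eq hex
    have hK' : Function.invFunOn π (F : Set X) (π x) - x ∈ K :=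
      QuotientAddGroup.eq_iff_sub_mem.mp h2
    exact key _ h1 _ hx hK'
  calc ((lam s) '' (F : Set X)).ncard ≤ (g '' (π '' (F : Set X))).ncard :=
        Set.ncard_le_ncard hsub ((F.finite_toSet.image π).image g)
    _ ≤ (π '' (F : Set X)).ncard := Set.ncard_image_le (F.finite_toSet.image π)
end

section
/- Let S be a cancellative left Ore monoid acting on the right on a compact Hausdorff space K by continuous self-maps ρ_s. Then the surjective core E(ρ) = ⋂_{t∈S} ρ_t(K) is a closed subset of K, and ρ_s(E(ρ)) = E(ρ) for every s ∈ S. -/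
/-!
The ranges `ρ_t(K)` are compact, hence closed, and the Ore condition makes them a downward
directed family: `ρ_{at}(K) ⊆ ρ_t(K)` and `as = bt` gives `ρ_{as}(K) ⊆ ρ_s(K) ∩ ρ_t(K)`.
By compactness a continuous map commutes with intersections of directed families of closed
sets, so `ρ_s(E) = ⋂_t ρ_{ts}(K)`, and this intersection is again `E` by the Ore condition.
-/

open Set

theorem image_iInter_of_directed_of_isClosed {ι X Y : Type*} [Nonempty ι] [TopologicalSpace X]
    [CompactSpace X] [TopologicalSpace Y] [T1Space Y] {f : X → Y} (hf : Continuous f)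
    {F : ι → Set X} (hF : Directed (· ⊇ ·) F) (hF_closed : ∀ i, IsClosed (F i)) :
    f '' ⋂ i, F i = ⋂ i, f '' F i := by
  refine (image_iInter_subset F f).antisymm fun y hy => ?_
  have hfiber_closed : ∀ i, IsClosed (f ⁻¹' {y} ∩ F i) :=
    fun i => (isClosed_singleton.preimage hf).inter (hF_closed i)
  have hfiber_ne : ∀ i, (f ⁻¹' {y} ∩ F i).Nonempty := by
    intro i
    obtain ⟨x, hx, rfl⟩ := mem_iInter.mp hy i
    exact ⟨x, rfl, hx⟩
  have hfiber_dir : Directed (· ⊇ ·) fun i => f ⁻¹' {y} ∩ F i :=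
    hF.mono_comp _ fun _ _ h => inter_subset_inter_right _ h
  obtain ⟨x, hx⟩ := IsCompact.nonempty_iInter_of_directed_nonempty_isCompact_isClosed _
    hfiber_dir hfiber_ne (fun i => (hfiber_closed i).isCompact) hfiber_closed
  simp only [mem_iInter, mem_inter_iff, mem_preimage, mem_singleton_iff] at hx
  exact ⟨x, mem_iInter.mpr fun i => (hx i).2, (hx (Classical.arbitrary ι)).1⟩

def surjectiveCore {S K : Type*} [TopologicalSpace K] (ρ : S → C(K, K)) : Set K :=
  ⋂ t, range (ρ t)

theorem isClosed_surjectiveCore {S K : Type*} [TopologicalSpace K] [CompactSpace K] [T2Space K]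
    (ρ : S → C(K, K)) : IsClosed (surjectiveCore ρ) :=
  isClosed_iInter fun t => (isCompact_range (ρ t).continuous).isClosed

section RightAction

variable {S K : Type*} [Monoid S] [TopologicalSpace K] {ρ : S → C(K, K)}

theorem range_mul_subset_range (hρmul : ∀ s t : S, ρ (s * t) = (ρ t).comp (ρ s)) (a t : S) :
    range (ρ (a * t)) ⊆ range (ρ t) := by
  rw [hρmul, ContinuousMap.coe_comp]
  exact range_comp_subset_range _ _

theorem image_range (hρmul : ∀ s t : S, ρ (s * t) = (ρ t).comp (ρ s)) (s t : S) :
    ρ s '' range (ρ t) = range (ρ (t * s)) := by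
  rw [hρmul, ContinuousMap.coe_comp, range_comp]

theorem directed_range (hρmul : ∀ s t : S, ρ (s * t) = (ρ t).comp (ρ s))
    (hOre : ∀ s t : S, ∃ a b : S, a * s = b * t) :
    Directed (· ⊇ ·) fun t => range (ρ t) := by
  intro t₁ t₂
  obtain ⟨a, b, hab⟩ := hOre t₁ t₂
  refine ⟨a * t₁, range_mul_subset_range hρmul a t₁, ?_⟩
  rw [hab]
  exact range_mul_subset_range hρmul b t₂

theorem iInter_range_mul_right (hρmul : ∀ s t : S, ρ (s * t) = (ρ t).comp (ρ s))
    (hOre : ∀ s t : S, ∃ a b : S, a * s = b * t) (s : S) :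
    ⋂ t, range (ρ (t * s)) = surjectiveCore ρ := by
  refine subset_antisymm (subset_iInter fun t => ?_) (subset_iInter fun t => iInter_subset _ _)
  obtain ⟨a, b, hab⟩ := hOre s t
  calc ⋂ t, range (ρ (t * s)) ⊆ range (ρ (a * s)) := iInter_subset _ a
    _ = range (ρ (b * t)) := by rw [hab]
    _ ⊆ range (ρ t) := range_mul_subset_range hρmul b t

theorem image_surjectiveCore [CompactSpace K] [T2Space K]
    (hρmul : ∀ s t : S, ρ (s * t) = (ρ t).comp (ρ s))
    (hOre : ∀ s t : S, ∃ a b : S, a * s = b * t) (s : S) :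
    ρ s '' surjectiveCore ρ = surjectiveCore ρ := by
  rw [surjectiveCore, image_iInter_of_directed_of_isClosed (ρ s).continuous
    (directed_range hρmul hOre) fun t => (isCompact_range (ρ t).continuous).isClosed]
  simp_rw [image_range hρmul]
  exact iInter_range_mul_right hρmul hOre s

end RightAction

theorem stmt8_general {S K : Type*} [CancelMonoid S] [TopologicalSpace K] [CompactSpace K] [T2Space K]
    (hOre : ∀ s t : S, ∃ a b : S, a * s = b * t)
    (ρ : S → C(K, K))
    (hρmul : ∀ s t : S, ρ (s * t) = (ρ t).comp (ρ s)) :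
    IsClosed (⋂ t : S, Set.range (ρ t)) ∧
      ∀ s : S, (ρ s) '' (⋂ t : S, Set.range (ρ t)) = ⋂ t : S, Set.range (ρ t) :=
  ⟨isClosed_surjectiveCore ρ, image_surjectiveCore hρmul hOre⟩

/-- Let `S` be a cancellative left Ore monoid acting on the right on a compact Hausdorff space
`K` by continuous self-maps `ρ_s` (a monoid anti-homomorphism). Then the surjective core
`E(ρ) = ⋂_{t ∈ S} ρ_t(K)` is closed in `K`, and `ρ_s(E(ρ)) = E(ρ)` for every `s ∈ S`. -/
theorem stmt8 {S K : Type*} [CancelMonoid S] [TopologicalSpace K] [CompactSpace K] [T2Space K]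
    (hOre : ∀ s t : S, ∃ a b : S, a * s = b * t)
    (ρ : S → C(K, K)) (hρ1 : ρ 1 = ContinuousMap.id K)
    (hρmul : ∀ s t : S, ρ (s * t) = (ρ t).comp (ρ s)) :
    IsClosed (⋂ t : S, Set.range (ρ t)) ∧
      ∀ s : S, (ρ s) '' (⋂ t : S, Set.range (ρ t)) = ⋂ t : S, Set.range (ρ t) :=
  stmt8_general hOre ρ hρmul
end

section
/- Let K and Q be compact Hausdorff spaces and π : K → Q a continuous surjection. For every finite open cover U of K there exists a finite open cover W of Q such that sup_{W∈W} N_{π^{-1}(W)}(U) = sup_{q∈Q} N_{π^{-1}(q)}(U), where N_B(U) denotes the minimal number of elements of U needed to cover B. -/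
/-- For a finite open cover `U` of a compact space `K` and a subset `B ⊆ K`, `coverNum U B` is
the minimal cardinality of a subfamily of `U` that covers `B`. -/
noncomputable def coverNum {K : Type*} [TopologicalSpace K]
    (U : Finset (Set K)) (B : Set K) : ℕ :=
  sInf {n : ℕ | ∃ V ⊆ U, V.card = n ∧ B ⊆ ⋃₀ (V : Set (Set K))}

/-!
Choose for every fibre `π⁻¹{q}` a minimal subcover `V_q ⊆ U`. Since `π` is a closed map, the set
`W_q` of points whose whole fibre lies in `⋃₀ V_q` is an open neighbourhood of `q`, and
`π⁻¹(W_q)` is still covered by `V_q`. Hence `q ↦ N_{π⁻¹(q)}(U)` is upper semicontinuous in this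
strong sense, and finitely many `W_q` covering the compact space `Q` form the required cover:
each `W_q` contributes at most `N_{π⁻¹(q)}(U)`, and each fibre lies inside some `π⁻¹(W_q)`.
-/

open Set

section coverNum

variable {K : Type*} [TopologicalSpace K] {U V : Finset (Set K)} {B B' : Set K}

theorem coverNum_le_card (hVU : V ⊆ U) (hB : B ⊆ ⋃₀ (V : Set (Set K))) :
    coverNum U B ≤ V.card :=
  Nat.sInf_le ⟨V, hVU, rfl, hB⟩

theorem exists_subcover_card_eq_coverNum (hB : B ⊆ ⋃₀ (U : Set (Set K))) :
    ∃ V ⊆ U, V.card = coverNum U B ∧ B ⊆ ⋃₀ (V : Set (Set K)) :=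
  Nat.sInf_mem (s := {n | ∃ V ⊆ U, V.card = n ∧ B ⊆ ⋃₀ (V : Set (Set K))})
    ⟨U.card, U, subset_rfl, rfl, hB⟩

theorem coverNum_le_card_self (hB : B ⊆ ⋃₀ (U : Set (Set K))) : coverNum U B ≤ U.card :=
  coverNum_le_card subset_rfl hB

theorem coverNum_mono (hB' : B' ⊆ ⋃₀ (U : Set (Set K))) (hBB' : B ⊆ B') :
    coverNum U B ≤ coverNum U B' := by
  obtain ⟨V, hVU, hVcard, hV⟩ := exists_subcover_card_eq_coverNum hB'
  exact hVcard ▸ coverNum_le_card hVU (hBB'.trans hV)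

end coverNum

theorem IsClosedMap.exists_isOpen_mem_coverNum_preimage_le {K Q : Type*} [TopologicalSpace K]
    [TopologicalSpace Q] {π : K → Q} (hπ : IsClosedMap π) {U : Finset (Set K)}
    (hUopen : ∀ u ∈ U, IsOpen u) {q : Q} (hq : π ⁻¹' {q} ⊆ ⋃₀ (U : Set (Set K))) :
    ∃ W : Set Q, IsOpen W ∧ q ∈ W ∧ coverNum U (π ⁻¹' W) ≤ coverNum U (π ⁻¹' {q}) := by
  obtain ⟨V, hVU, hVcard, hV⟩ := exists_subcover_card_eq_coverNum hq
  have hVopen : IsOpen (⋃₀ (V : Set (Set K))) := isOpen_sUnion fun u hu => hUopen u (hVU hu)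
  refine ⟨kernImage π (⋃₀ (V : Set (Set K))), isClosedMap_iff_kernImage.mp hπ hVopen,
    singleton_subset_iff.mp (subset_kernImage_iff.mpr hV), ?_⟩
  exact hVcard ▸ coverNum_le_card hVU (subset_kernImage_iff.mp subset_rfl)

theorem stmt11_general {K Q : Type*} [TopologicalSpace K] [CompactSpace K]
    [TopologicalSpace Q] [CompactSpace Q] [T2Space Q]
    (π : C(K, Q))
    (U : Finset (Set K)) (hUopen : ∀ u ∈ U, IsOpen u)
    (hUcov : Set.univ ⊆ ⋃₀ (U : Set (Set K))) :
    ∃ W : Finset (Set Q), (∀ w ∈ W, IsOpen w) ∧ Set.univ ⊆ ⋃₀ (W : Set (Set Q)) ∧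
      W.sup (fun w => coverNum U ((π) ⁻¹' w)) =
        sSup (Set.range fun q : Q => coverNum U ((π) ⁻¹' {q})) := by
  have hcov : ∀ B : Set K, B ⊆ ⋃₀ (U : Set (Set K)) := fun B => (subset_univ B).trans hUcov
  choose W hWopen hqW hWle using fun q =>
    π.continuous.isClosedMap.exists_isOpen_mem_coverNum_preimage_le hUopen (hcov (π ⁻¹' {q}))
  obtain ⟨t, ht⟩ := CompactSpace.elim_nhds_subcover W fun q => (hWopen q).mem_nhds (hqW q)
  have hbdd : BddAbove (range fun q : Q => coverNum U (π ⁻¹' {q})) :=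
    ⟨U.card, forall_mem_range.mpr fun q => coverNum_le_card_self (hcov _)⟩
  have hmem (q : Q) : ∃ q' ∈ t, q ∈ W q' := by
    simpa using (ht.symm ▸ mem_univ q : q ∈ ⋃ x ∈ t, W x)
  refine ⟨t.image W, by simpa using fun q _ => hWopen q, fun q _ => ?_, le_antisymm ?_ ?_⟩
  · obtain ⟨q', hq't, hq'⟩ := hmem q
    exact ⟨W q', Finset.mem_coe.mpr (Finset.mem_image_of_mem W hq't), hq'⟩
  · refine Finset.sup_le fun w hw => ?_
    obtain ⟨q, -, rfl⟩ := Finset.mem_image.mp hw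
    exact (hWle q).trans (le_csSup hbdd ⟨q, rfl⟩)
  · refine csSup_le' (forall_mem_range.mpr fun q => ?_)
    obtain ⟨q', hq't, hq'⟩ := hmem q
    calc coverNum U (π ⁻¹' {q}) ≤ coverNum U (π ⁻¹' W q') :=
          coverNum_mono (hcov _) (preimage_mono (singleton_subset_iff.mpr hq'))
      _ ≤ (t.image W).sup fun w => coverNum U (π ⁻¹' w) :=
          Finset.le_sup (f := fun w => coverNum U (π ⁻¹' w)) (Finset.mem_image_of_mem W hq't)

/-- Let `K` and `Q` be compact Hausdorff spaces and `π : K → Q` a continuous surjection. For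
every finite open cover `U` of `K` there exists a finite open cover `W` of `Q` such that
`sup_{W ∈ W} N_{π⁻¹(W)}(U) = sup_{q ∈ Q} N_{π⁻¹(q)}(U)`. -/
theorem stmt11 {K Q : Type*} [TopologicalSpace K] [CompactSpace K] [T2Space K]
    [TopologicalSpace Q] [CompactSpace Q] [T2Space Q]
    (π : C(K, Q)) (hπ : Function.Surjective π)
    (U : Finset (Set K)) (hUopen : ∀ u ∈ U, IsOpen u)
    (hUcov : Set.univ ⊆ ⋃₀ (U : Set (Set K))) :
    ∃ W : Finset (Set Q), (∀ w ∈ W, IsOpen w) ∧ Set.univ ⊆ ⋃₀ (W : Set (Set Q)) ∧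
      W.sup (fun w => coverNum U ((π) ⁻¹' w)) =
        sSup (Set.range fun q : Q => coverNum U ((π) ⁻¹' {q})) :=
  stmt11_general π U hUopen hUcov
end

section
/- Let G be an amenable group (with a fixed right Følner net 𝔰), and let M₁ = (M₁, v₁), M₂ = (M₂, v₂) be commutative monoids each equipped with a norm function v_j : M_j → ℝ≥0 that is monotone (v(x) ≤ v(x+y)) and subadditive (v(x+y) ≤ v(x)+v(y)), together with left G-actions α₁, α₂ by norm-nonincreasing monoid endomorphisms. Define on M₁ ⊕ M₂ the norm (v₁⊕v₂)(x,y) = v₁(x)+v₂(y) and the diagonal action α₁⊕α₂. Then h(α₁⊕α₂, 𝔰) = h(α₁, 𝔰) + h(α₂, 𝔰). -/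
open Filter

/-- The trajectory `T_F(α, m) = ∑_{f ∈ F} α_f(m)` of `m` along a finite subset `F`. -/
noncomputable def entT {G M : Type*} [AddCommMonoid M] (α : G → M →+ M)
    (F : Finset G) (m : M) : M :=
  ∑ f ∈ F, α f m

/-- The entropy of the action `α` on the normed monoid `(M, v)` at `m`, along the net `F`,
defined as `limsup_i v(T_{F i}(α, m)) / |F i|`. -/
noncomputable def entH {G M I : Type*} [AddCommMonoid M] [Preorder I]
    (α : G → M →+ M) (v : M → ℝ) (F : I → Finset G) (m : M) : ENNReal :=
  Filter.limsup (fun i => ENNReal.ofReal (v (entT α (F i) m) / ((F i).card : ℝ))) Filter.atTop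

/-- The entropy of the action `α` on the normed monoid `(M, v)` along the net `F`. -/
noncomputable def enth {G M I : Type*} [AddCommMonoid M] [Preorder I]
    (α : G → M →+ M) (v : M → ℝ) (F : I → Finset G) : ENNReal :=
  ⨆ m : M, entH α v F m


section OWMachinery
set_option linter.unusedSectionVars false

variable {G : Type*} [Group G] [DecidableEq G]

/-- right translate -/
def rT (A : Finset G) (k : G) : Finset G := A.image (· * k)
/-- left translate -/
def lT (g : G) (A : Finset G) : Finset G := A.image (g * ·)
/-- boundary count -/
def bdry (A : Finset G) (k : G) : ℕ := (rT A k \ A).card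

lemma card_rT (A : Finset G) (k : G) : (rT A k).card = A.card :=
  Finset.card_image_of_injective _ (mul_left_injective k)

lemma card_lT (g : G) (A : Finset G) : (lT g A).card = A.card :=
  Finset.card_image_of_injective _ (mul_right_injective g)

lemma mem_rT {A : Finset G} {k x : G} : x ∈ rT A k ↔ ∃ a ∈ A, a * k = x := by
  simp only [rT, Finset.mem_image]

lemma mem_lT {A : Finset G} {g x : G} : x ∈ lT g A ↔ ∃ a ∈ A, g * a = x := by
  simp only [lT, Finset.mem_image]

lemma rT_lT (g : G) (A : Finset G) (k : G) : rT (lT g A) k = lT g (rT A k) := by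
  simp only [rT, lT, Finset.image_image]
  congr 1; ext x; simp [mul_assoc]

lemma bdry_lT (g : G) (A : Finset G) (k : G) : bdry (lT g A) k = bdry A k := by
  unfold bdry
  rw [rT_lT]
  unfold lT
  rw [← Finset.image_sdiff _ _ (mul_right_injective g)]
  exact Finset.card_image_of_injective _ (mul_right_injective g)

lemma card_sdiff_rT (A : Finset G) (k : G) : (A \ rT A k).card = bdry A k :=
  (Finset.card_sdiff_comm (card_rT A k).symm).symm ▸ rfl

lemma bdry_union_le (A B : Finset G) (k : G) : bdry (A ∪ B) k ≤ bdry A k + bdry B k := by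
  refine le_trans (Finset.card_le_card ?_) (le_trans (Finset.card_union_le _ _) le_rfl)
  intro x hx
  rw [Finset.mem_sdiff] at hx
  obtain ⟨hx1, hx2⟩ := hx
  rw [rT, Finset.image_union] at hx1
  simp only [Finset.mem_union] at hx1 hx2 ⊢
  push_neg at hx2
  rcases hx1 with h | h
  · exact Or.inl (Finset.mem_sdiff.2 ⟨h, hx2.1⟩)
  · exact Or.inr (Finset.mem_sdiff.2 ⟨h, hx2.2⟩)

lemma bdry_sdiff_le (A B : Finset G) (k : G) : bdry (A \ B) k ≤ bdry A k + bdry B k := by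
  unfold bdry
  calc (rT (A \ B) k \ (A \ B)).card ≤ ((rT A k \ A) ∪ (B \ rT B k)).card := by
        apply Finset.card_le_card
        intro x hx
        rw [Finset.mem_sdiff] at hx
        obtain ⟨hx1, hx2⟩ := hx
        rw [mem_rT] at hx1
        obtain ⟨a, ha, rfl⟩ := hx1
        rw [Finset.mem_sdiff] at ha
        simp only [Finset.mem_union, Finset.mem_sdiff]
        by_cases hA : a * k ∈ A
        · refine Or.inr ⟨?_, ?_⟩
          · by_contra hB
            exact hx2 (Finset.mem_sdiff.2 ⟨hA, hB⟩)
          · rw [mem_rT]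
            rintro ⟨b, hb, hbk⟩
            have : b = a := mul_left_injective k hbk
            exact ha.2 (this ▸ hb)
        · exact Or.inl ⟨mem_rT.2 ⟨a, ha.1, rfl⟩, hA⟩
    _ ≤ (rT A k \ A).card + (B \ rT B k).card := Finset.card_union_le _ _
    _ = _ := by rw [card_sdiff_rT]; rfl

lemma sum_card_inter_le (Good D T : Finset G) :
    ∑ g ∈ Good, ((lT g T) ∩ D).card ≤ D.card * T.card := by
  classical
  have h1 : ∀ g, ((lT g T) ∩ D).card = ∑ x ∈ D, if x ∈ lT g T then 1 else 0 := by
    intro g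
    rw [← Finset.card_filter]
    congr 1
    rw [Finset.filter_mem_eq_inter, Finset.inter_comm]
  calc ∑ g ∈ Good, ((lT g T) ∩ D).card
      = ∑ x ∈ D, ∑ g ∈ Good, if x ∈ lT g T then 1 else 0 := by
        rw [← Finset.sum_comm]; exact Finset.sum_congr rfl fun g _ => h1 g
    _ = ∑ x ∈ D, (Good.filter (fun g => x ∈ lT g T)).card := by
        exact Finset.sum_congr rfl fun x _ => (Finset.card_filter _ _).symm
    _ ≤ ∑ _x ∈ D, T.card := by
        refine Finset.sum_le_sum fun x _ => ?_
        refine le_trans (Finset.card_le_card (?_ : _ ⊆ T.image (fun t => x * t⁻¹)))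
          Finset.card_image_le
        intro g hg
        rw [Finset.mem_filter] at hg
        obtain ⟨-, hg⟩ := hg
        rw [mem_lT] at hg
        obtain ⟨t, ht, rfl⟩ := hg
        rw [Finset.mem_image]
        exact ⟨t, ht, by group⟩
    _ = D.card * T.card := by rw [Finset.sum_const, smul_eq_mul]

def good (R₀ T : Finset G) (t₀ : G) : Finset G :=
  (rT R₀ t₀⁻¹).filter (fun g => lT g T ⊆ R₀)

def DD (A T : Finset G) (t₀ : G) : ℕ := ∑ k ∈ T, bdry A (t₀⁻¹ * k)

lemma good_sub {R₀ T : Finset G} {t₀ g : G} (hg : g ∈ good R₀ T t₀) : lT g T ⊆ R₀ :=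
  (Finset.mem_filter.1 hg).2

lemma card_good (R₀ T : Finset G) (t₀ : G) :
    R₀.card ≤ (good R₀ T t₀).card + DD R₀ T t₀ := by
  classical
  have hsplit : (good R₀ T t₀).card
      + ((rT R₀ t₀⁻¹).filter (fun g => ¬ lT g T ⊆ R₀)).card = R₀.card := by
    rw [← card_rT R₀ t₀⁻¹]
    exact Finset.card_filter_add_card_filter_not _
  have hbad : ((rT R₀ t₀⁻¹).filter (fun g => ¬ lT g T ⊆ R₀))
      ⊆ T.biUnion (fun k => rT (rT R₀ (t₀⁻¹ * k) \ R₀) k⁻¹) := by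
    intro g hg
    rw [Finset.mem_filter] at hg
    obtain ⟨hg1, hg2⟩ := hg
    rw [Finset.not_subset] at hg2
    obtain ⟨y, hy1, hy2⟩ := hg2
    rw [mem_lT] at hy1
    obtain ⟨k, hk, rfl⟩ := hy1
    rw [mem_rT] at hg1
    obtain ⟨x, hx, rfl⟩ := hg1
    rw [Finset.mem_biUnion]
    refine ⟨k, hk, ?_⟩
    rw [mem_rT]
    refine ⟨x * t₀⁻¹ * k, ?_, by group⟩
    rw [Finset.mem_sdiff]
    exact ⟨mem_rT.2 ⟨x, hx, by group⟩, hy2⟩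
  have hbadcard : ((rT R₀ t₀⁻¹).filter (fun g => ¬ lT g T ⊆ R₀)).card ≤ DD R₀ T t₀ := by
    refine le_trans (Finset.card_le_card hbad) (le_trans (Finset.card_biUnion_le) ?_)
    unfold DD bdry
    exact Finset.sum_le_sum fun k _ => le_of_eq (card_rT _ _)
  omega

variable (φ : Finset G → ℝ)
  (hφmono : ∀ A B : Finset G, A ⊆ B → φ A ≤ φ B)
  (hφsub : ∀ A B : Finset G, φ (A ∪ B) ≤ φ A + φ B)
  (hφinv : ∀ (g : G) (A : Finset G), φ (lT g A) = φ A)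

include hφmono hφsub hφinv in
lemma extractLoop (T : Finset G) (hT : T.Nonempty) (Good : Finset G) (ε : ℝ)
    (hε : 0 < ε) (hε2 : ε ≤ 1/2) :
    ∀ (n : ℕ) (R : Finset G), R.card ≤ n →
    ∃ (N : ℕ) (R' : Finset G), R' ⊆ R ∧
      (∀ g ∈ Good, (((lT g T) ∩ R').card : ℝ) < (1-ε) * T.card) ∧
      (N : ℝ) * ((1-ε) * T.card) ≤ (R.card : ℝ) - R'.card ∧
      φ R ≤ N * φ T + φ R' ∧
      (∀ k : G, ((bdry R' k : ℝ)) ≤ bdry R k + N * bdry T k) := by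
  have hTpos : (0:ℝ) < (1-ε) * T.card := by
    have : (1:ℝ) ≤ T.card := by exact_mod_cast Finset.card_pos.2 hT
    nlinarith
  intro n
  induction n with
  | zero =>
    intro R hR
    refine ⟨0, R, le_refl _, ?_, by simp, by simp, fun k => by simp⟩
    intro g hg
    have hRe : R = ∅ := Finset.card_eq_zero.1 (Nat.le_zero.1 hR)
    subst hRe
    simpa using hTpos
  | succ n ih =>
    intro R hR
    by_cases hex : ∃ g ∈ Good, (1-ε) * T.card ≤ (((lT g T) ∩ R).card : ℝ)
    · obtain ⟨g, hgG, hgbig⟩ := hex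
      set R₁ := R \ lT g T with hR₁
      have hcard : ((lT g T) ∩ R).card + R₁.card = R.card := by
        rw [hR₁, Finset.inter_comm]
        exact Finset.card_inter_add_card_sdiff R (lT g T)
      have hpos : 0 < ((lT g T) ∩ R).card := by
        by_contra h
        push_neg at h
        have h0 : (((lT g T) ∩ R).card : ℝ) = 0 := by exact_mod_cast Nat.le_zero.1 h
        rw [h0] at hgbig; linarith
      have hcard1 : R₁.card ≤ n := by omega
      obtain ⟨N, R', hsub, hstop, hcov, hφbd, hbd⟩ := ih R₁ hcard1
      refine ⟨N + 1, R', le_trans hsub (Finset.sdiff_subset), hstop, ?_, ?_, ?_⟩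
      · have h1 : ((R₁.card : ℝ)) = (R.card : ℝ) - ((lT g T) ∩ R).card := by
          push_cast [← hcard]; ring
        push_cast
        nlinarith
      · have hsubR : R ⊆ lT g T ∪ R₁ := by
          intro x hx
          rw [Finset.mem_union, hR₁, Finset.mem_sdiff]
          by_cases hxg : x ∈ lT g T
          · exact Or.inl hxg
          · exact Or.inr ⟨hx, hxg⟩
        calc φ R ≤ φ (lT g T ∪ R₁) := hφmono _ _ hsubR
          _ ≤ φ (lT g T) + φ R₁ := hφsub _ _
          _ = φ T + φ R₁ := by rw [hφinv]
          _ ≤ φ T + (N * φ T + φ R') := by linarith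
          _ = (N + 1 : ℕ) * φ T + φ R' := by push_cast; ring
      · intro k
        have h2 : bdry R₁ k ≤ bdry R k + bdry T k := by
          rw [hR₁]
          exact le_trans (bdry_sdiff_le R (lT g T) k) (by rw [bdry_lT])
        have h3 := hbd k
        have h2' : ((bdry R₁ k : ℝ)) ≤ bdry R k + bdry T k := by exact_mod_cast h2
        have h4 : (0:ℝ) ≤ (bdry T k : ℝ) := Nat.cast_nonneg _
        push_cast
        nlinarith
    · push_neg at hex
      exact ⟨0, R, le_refl _, hex, by simp, by simp, fun k => by simp⟩

include hφmono hφsub hφinv in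
lemma owRound (ε : ℝ) (hε : 0 < ε) (hε2 : ε ≤ 1/2) (T : Finset G) (hT : T.Nonempty)
    (t₀ : G) (R₀ : Finset G)
    (hδ : (DD R₀ T t₀ : ℝ) ≤ (R₀.card : ℝ) / 4) :
    ∃ (N : ℕ) (R' : Finset G), R' ⊆ R₀ ∧
      (N : ℝ) * ((1-ε) * T.card) ≤ (R₀.card : ℝ) - R'.card ∧
      φ R₀ ≤ N * φ T + φ R' ∧
      (∀ k : G, ((bdry R' k : ℝ)) ≤ bdry R₀ k + N * bdry T k) ∧
      (R'.card : ℝ) ≤ (1 - (3/4) * ε) * R₀.card := by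
  obtain ⟨N, R', hsub, hstop, hcov, hφbd, hbd⟩ :=
    extractLoop φ hφmono hφsub hφinv T hT (good R₀ T t₀) ε hε hε2 R₀.card R₀ le_rfl
  refine ⟨N, R', hsub, hcov, hφbd, hbd, ?_⟩
  -- covered amount estimate
  have hTcard : (0:ℝ) < T.card := by exact_mod_cast Finset.card_pos.2 hT
  set g₀ := (good R₀ T t₀).card with hg₀
  -- sum over Good of |lT g T ∩ R'| ≤ g₀ (1-ε)|T|
  have hA : ((∑ g ∈ good R₀ T t₀, ((lT g T) ∩ R').card : ℕ) : ℝ)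
      ≤ (g₀ : ℝ) * ((1-ε) * T.card) := by
    push_cast
    calc ∑ g ∈ good R₀ T t₀, (((lT g T) ∩ R').card : ℝ)
        ≤ ∑ _g ∈ good R₀ T t₀, (1-ε) * T.card :=
          Finset.sum_le_sum fun g hg => le_of_lt (hstop g hg)
      _ = (g₀ : ℝ) * ((1-ε) * T.card) := by rw [Finset.sum_const, nsmul_eq_mul]
  -- per g: T.card ≤ |∩ R'| + |∩ (R₀ \ R')|
  have hB : ∀ g ∈ good R₀ T t₀,
      T.card ≤ ((lT g T) ∩ R').card + ((lT g T) ∩ (R₀ \ R')).card := by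
    intro g hg
    have h1 : ((lT g T) ∩ R').card + ((lT g T) \ R').card = (lT g T).card :=
      Finset.card_inter_add_card_sdiff _ _
    have h2 : (lT g T) \ R' ⊆ (lT g T) ∩ (R₀ \ R') := by
      intro x hx
      rw [Finset.mem_sdiff] at hx
      rw [Finset.mem_inter, Finset.mem_sdiff]
      exact ⟨hx.1, good_sub hg hx.1, hx.2⟩
    have := Finset.card_le_card h2
    rw [card_lT] at h1
    omega
  have hC : ∑ g ∈ good R₀ T t₀, ((lT g T) ∩ (R₀ \ R')).card
      ≤ (R₀ \ R').card * T.card := sum_card_inter_le _ _ _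
  have hBB : g₀ * T.card ≤ ∑ g ∈ good R₀ T t₀, ((lT g T) ∩ R').card
      + (R₀ \ R').card * T.card := by
    calc g₀ * T.card = ∑ _g ∈ good R₀ T t₀, T.card := by
          rw [Finset.sum_const, smul_eq_mul]
      _ ≤ ∑ g ∈ good R₀ T t₀, (((lT g T) ∩ R').card + ((lT g T) ∩ (R₀ \ R')).card) :=
          Finset.sum_le_sum hB
      _ = _ + ∑ g ∈ good R₀ T t₀, ((lT g T) ∩ (R₀ \ R')).card := Finset.sum_add_distrib
      _ ≤ _ := Nat.add_le_add_left hC _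
  have hsd : ((R₀ \ R').card : ℝ) = (R₀.card : ℝ) - R'.card := by
    rw [Finset.card_sdiff_of_subset hsub, Nat.cast_sub (Finset.card_le_card hsub)]
  -- cast hBB to ℝ and combine with hA
  have hBBr : (g₀ : ℝ) * T.card ≤ (g₀ : ℝ) * ((1-ε) * T.card)
      + ((R₀.card : ℝ) - R'.card) * T.card := by
    have := hBB
    have hc : ((g₀ * T.card : ℕ) : ℝ) ≤ ((∑ g ∈ good R₀ T t₀, ((lT g T) ∩ R').card
        + (R₀ \ R').card * T.card : ℕ) : ℝ) := by exact_mod_cast this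
    push_cast at hc
    rw [← hsd]
    push_cast
    calc (g₀ : ℝ) * T.card ≤ _ := hc
      _ ≤ _ := by
        have := hA
        push_cast at this
        linarith
  -- ε g₀ ≤ cov
  have hcov2 : ε * g₀ ≤ (R₀.card : ℝ) - R'.card := by
    nlinarith
  -- g₀ ≥ 3/4 R₀
  have hgood : (3/4 : ℝ) * R₀.card ≤ (g₀ : ℝ) := by
    have := card_good R₀ T t₀
    have hcast : (R₀.card : ℝ) ≤ (g₀ : ℝ) + (DD R₀ T t₀ : ℝ) := by exact_mod_cast this
    linarith
  nlinarith

include hφmono hφsub hφinv in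
lemma owRounds (ε c S Θ γ : ℝ) (hε : 0 < ε) (hε2 : ε ≤ 1/2) (hc : 0 ≤ c)
    (hΘ : 0 ≤ Θ) (hγ : 0 ≤ γ) :
    ∀ (Ts : List (Finset G × G)),
    (∀ p ∈ Ts, p.2 ∈ p.1 ∧ φ p.1 ≤ c * p.1.card) →
    List.Pairwise (fun p q => (DD p.1 q.1 q.2 : ℝ) ≤ γ * p.1.card) Ts →
    ∀ R : Finset G, (R.card : ℝ) ≤ S →
    (∀ q ∈ Ts, (DD R q.1 q.2 : ℝ) ≤ Θ/4 - 2*S*γ*(Ts.length : ℝ)) →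
    ∃ R'', R'' ⊆ R ∧ φ R ≤ c/(1-ε) * ((R.card : ℝ) - R''.card) + φ R'' ∧
      (R''.card : ℝ) ≤ max Θ ((1-ε/4)^(Ts.length) * R.card) := by
  intro Ts
  induction Ts with
  | nil =>
    intro _ _ R _ _
    refine ⟨R, le_refl _, by simp, ?_⟩
    simp only [List.length_nil, pow_zero, one_mul]
    exact le_max_right _ _
  | cons p Ts' ih =>
    intro hmem hpair R hS hDD
    by_cases hsmall : (R.card : ℝ) ≤ Θ
    · refine ⟨R, le_refl _, by simp, le_max_of_le_left hsmall⟩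
    · push_neg at hsmall
      have hRpos : (0:ℝ) < R.card := lt_of_le_of_lt hΘ hsmall
      have hSpos : (0:ℝ) < S := lt_of_lt_of_le hRpos hS
      have hp := hmem p List.mem_cons_self
      have hpne : p.1.Nonempty := ⟨p.2, hp.1⟩
      have hlen : ((p :: Ts').length : ℝ) = (Ts'.length : ℝ) + 1 := by
        push_cast [List.length_cons]; ring
      have hlnn : (0:ℝ) ≤ ((p :: Ts').length : ℝ) := Nat.cast_nonneg _
      have h2' : (0:ℝ) ≤ 2*S*γ*((p :: Ts').length : ℝ) :=
        mul_nonneg (mul_nonneg (by linarith) hγ) hlnn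
      have hδ : (DD R p.1 p.2 : ℝ) ≤ (R.card : ℝ) / 4 := by
        have h1 := hDD p List.mem_cons_self
        linarith
      obtain ⟨N, R', hsub', hcovN, hφ', hbd', hshrink⟩ :=
        owRound φ hφmono hφsub hφinv ε hε hε2 p.1 hpne p.2 R hδ
      have hR'nn : (0:ℝ) ≤ (R'.card : ℝ) := Nat.cast_nonneg _
      have hR'S : ((R'.card : ℝ)) ≤ S :=
        le_trans (by exact_mod_cast Finset.card_le_card hsub') hS
      have hNc : (0:ℝ) ≤ (N : ℝ) * p.1.card :=
        mul_nonneg (Nat.cast_nonneg _) (Nat.cast_nonneg _)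
      have hNp : (N : ℝ) * p.1.card ≤ 2 * S := by nlinarith [hcovN]
      have hDD' : ∀ q ∈ Ts', (DD R' q.1 q.2 : ℝ) ≤ Θ/4 - 2*S*γ*(Ts'.length : ℝ) := by
        intro q hq
        have hrel : (DD p.1 q.1 q.2 : ℝ) ≤ γ * p.1.card :=
          (List.pairwise_cons.1 hpair).1 q hq
        have hsum : (DD R' q.1 q.2 : ℝ) ≤ (DD R q.1 q.2 : ℝ) + N * (DD p.1 q.1 q.2 : ℝ) := by
          unfold DD
          push_cast
          rw [Finset.mul_sum, ← Finset.sum_add_distrib]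
          exact Finset.sum_le_sum fun k _ => hbd' _
        have h1 := hDD q (List.mem_cons_of_mem _ hq)
        rw [hlen] at h1
        have h2 : (N : ℝ) * (DD p.1 q.1 q.2 : ℝ) ≤ 2 * S * γ := by
          calc (N : ℝ) * (DD p.1 q.1 q.2 : ℝ) ≤ (N : ℝ) * (γ * p.1.card) :=
                mul_le_mul_of_nonneg_left hrel (Nat.cast_nonneg _)
            _ = γ * ((N : ℝ) * p.1.card) := by ring
            _ ≤ γ * (2 * S) := mul_le_mul_of_nonneg_left hNp hγ
            _ = 2 * S * γ := by ring
        have hexp : 2*S*γ*((Ts'.length:ℝ)+1) = 2*S*γ*(Ts'.length:ℝ) + 2*S*γ := by ring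
        linarith
      obtain ⟨R'', hsub'', hφ'', hcard''⟩ := ih (fun q hq => hmem q (List.mem_cons_of_mem _ hq))
        (List.Pairwise.of_cons hpair) R' hR'S hDD'
      refine ⟨R'', le_trans hsub'' hsub', ?_, ?_⟩
      · have h4 : (0:ℝ) ≤ c/(1-ε) := div_nonneg hc (by linarith)
        have hNφ : (N : ℝ) * φ p.1 ≤ c/(1-ε) * ((R.card : ℝ) - R'.card) := by
          calc (N : ℝ) * φ p.1 ≤ (N : ℝ) * (c * p.1.card) :=
                mul_le_mul_of_nonneg_left hp.2 (Nat.cast_nonneg _)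
            _ = c/(1-ε) * ((N:ℝ) * ((1-ε) * p.1.card)) := by
                have hne1 : (1:ℝ)-ε ≠ 0 := by linarith
                field_simp
            _ ≤ c/(1-ε) * ((R.card : ℝ) - R'.card) :=
                mul_le_mul_of_nonneg_left hcovN h4
        calc φ R ≤ N * φ p.1 + φ R' := hφ'
          _ ≤ c/(1-ε) * ((R.card : ℝ) - R'.card)
              + (c/(1-ε) * ((R'.card : ℝ) - R''.card) + φ R'') := by linarith
          _ = c/(1-ε) * ((R.card : ℝ) - R''.card) + φ R'' := by ring
      · have hpow : (0:ℝ) ≤ (1-ε/4)^(Ts'.length) := by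
          apply pow_nonneg; linarith
        have h5 : (R'.card : ℝ) ≤ (1-ε/4) * R.card := by nlinarith [hshrink]
        have hmono2 : ((1:ℝ)-ε/4)^(Ts'.length) * R'.card
            ≤ (1-ε/4)^((p :: Ts').length) * R.card := by
          calc ((1:ℝ)-ε/4)^(Ts'.length) * R'.card
              ≤ (1-ε/4)^(Ts'.length) * ((1-ε/4) * R.card) :=
                mul_le_mul_of_nonneg_left h5 hpow
            _ = (1-ε/4)^((p :: Ts').length) * R.card := by
                rw [List.length_cons, pow_succ]; ring
        exact le_trans hcard'' (max_le_max (le_refl _) hmono2)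


variable {I : Type*} [Preorder I] [IsDirected I (· ≤ ·)] [Nonempty I]

lemma owMaster (F : I → Finset G) (hne : ∀ i, (F i).Nonempty)
    (hFol : ∀ g : G, Tendsto
      (fun i => ((((F i).image (· * g)) \ F i).card : ℝ) / ((F i).card : ℝ)) atTop (nhds 0))
    (φ : Finset G → ℝ) (C : ℝ) (hC : 0 ≤ C)
    (hφ0 : ∀ A, 0 ≤ φ A)
    (hφC : ∀ A : Finset G, φ A ≤ A.card * C)
    (hφmono : ∀ A B : Finset G, A ⊆ B → φ A ≤ φ B)
    (hφsub : ∀ A B : Finset G, φ (A ∪ B) ≤ φ A + φ B)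
    (hφinv : ∀ (g : G) (A : Finset G), φ (lT g A) = φ A) :
    ∃ L : ℝ, 0 ≤ L ∧
      Tendsto (fun i => φ (F i) / ((F i).card : ℝ)) atTop (nhds L) := by
  haveI : NeBot (atTop : Filter I) := atTop_neBot_iff.2 ⟨‹_›, ‹_›⟩
  set a : I → ℝ := fun i => φ (F i) / ((F i).card : ℝ) with ha
  have hcard : ∀ i, (0:ℝ) < ((F i).card : ℝ) := by
    intro i; exact_mod_cast Finset.card_pos.2 (hne i)
  have h0a : ∀ i, 0 ≤ a i := fun i => div_nonneg (hφ0 _) (le_of_lt (hcard i))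
  have hCa : ∀ i, a i ≤ C := by
    intro i
    rw [ha]
    rw [div_le_iff₀ (hcard i)]
    calc φ (F i) ≤ (F i).card * C := hφC _
      _ = C * (F i).card := by ring
  have hble : IsBoundedUnder (· ≤ ·) (atTop : Filter I) a := isBoundedUnder_of ⟨C, hCa⟩
  have hbge : IsBoundedUnder (· ≥ ·) (atTop : Filter I) a := isBoundedUnder_of ⟨0, h0a⟩
  set l : ℝ := liminf a atTop with hl
  have hl0 : 0 ≤ l := le_liminf_of_le hble.isCoboundedUnder_ge
    (Eventually.of_forall h0a)
  have hlC : l ≤ C := liminf_le_of_le hbge (fun b hb => by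
    obtain ⟨i, hi⟩ := hb.exists
    exact le_trans hi (hCa i))
  -- eventual boundary smallness
  have hevOne : ∀ (w : G) (δ : ℝ), 0 < δ →
      ∀ᶠ i in atTop, (bdry (F i) w : ℝ) ≤ δ * (F i).card := by
    intro w δ hδ
    have h1 := (hFol w).eventually_lt_const hδ
    filter_upwards [h1] with i hi
    have := hcard i
    rw [div_lt_iff₀ this] at hi
    exact le_of_lt (by exact_mod_cast hi)
  have hevDD : ∀ (T : Finset G) (t₀ : G), T.Nonempty → ∀ (γ' : ℝ), 0 < γ' →
      ∀ᶠ i in atTop, (DD (F i) T t₀ : ℝ) ≤ γ' * (F i).card := by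
    intro T t₀ hT γ' hγ'
    have hTpos : (0:ℝ) < T.card := by exact_mod_cast Finset.card_pos.2 hT
    have hδ : 0 < γ' / T.card := div_pos hγ' hTpos
    have h1 : ∀ᶠ i in atTop, ∀ k ∈ T, (bdry (F i) (t₀⁻¹ * k) : ℝ)
        ≤ (γ'/T.card) * (F i).card := by
      rw [eventually_all_finset]
      intro k _
      exact hevOne _ _ hδ
    filter_upwards [h1] with i hi
    unfold DD
    push_cast
    calc ∑ k ∈ T, (bdry (F i) (t₀⁻¹ * k) : ℝ)
        ≤ ∑ _k ∈ T, (γ'/T.card) * (F i).card := Finset.sum_le_sum hi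
      _ = T.card * ((γ'/T.card) * (F i).card) := by rw [Finset.sum_const, nsmul_eq_mul]
      _ = γ' * (F i).card := by field_simp
  have hevList : ∀ (Ts : List (Finset G × G)), (∀ q ∈ Ts, q.1.Nonempty) →
      ∀ (γ' : ℝ), 0 < γ' →
      ∀ᶠ i in atTop, ∀ q ∈ Ts, (DD (F i) q.1 q.2 : ℝ) ≤ γ' * (F i).card := by
    intro Ts
    induction Ts with
    | nil => intro _ γ' _; filter_upwards with i q hq; exact absurd hq List.not_mem_nil
    | cons p Ts' ih =>
      intro hney γ' hγ'
      have h1 := hevDD p.1 p.2 (hney p List.mem_cons_self) γ' hγ'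
      have h2 := ih (fun q hq => hney q (List.mem_cons_of_mem _ hq)) γ' hγ'
      filter_upwards [h1, h2] with i hi1 hi2
      intro q hq
      rcases List.mem_cons.1 hq with rfl | hq'
      · exact hi1
      · exact hi2 q hq'
  -- frequently small average
  have hfreq : ∀ (ε : ℝ), 0 < ε →
      ∃ᶠ j in atTop, φ (F j) ≤ (l + ε) * (F j).card := by
    intro ε hε
    have h1 : liminf a atTop < l + ε := by rw [← hl]; linarith
    have h2 := frequently_lt_of_liminf_lt hble.isCoboundedUnder_ge h1
    refine h2.mono fun j hj => ?_
    rw [ha] at hj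
    have := hcard j
    rw [div_lt_iff₀ this] at hj
    exact le_of_lt hj
  -- tile selection
  have tiles : ∀ (c γ : ℝ), 0 < γ → (∃ᶠ j in atTop, φ (F j) ≤ c * (F j).card) →
      ∀ n : ℕ, ∃ Ts : List (Finset G × G), Ts.length = n ∧
      (∀ p ∈ Ts, p.2 ∈ p.1 ∧ φ p.1 ≤ c * p.1.card) ∧
      List.Pairwise (fun p q => (DD p.1 q.1 q.2 : ℝ) ≤ γ * p.1.card) Ts := by
    intro c γ hγ hfr n
    induction n with
    | zero => exact ⟨[], rfl, by simp, List.Pairwise.nil⟩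
    | succ n ihn =>
      obtain ⟨Ts, hlen, hmem, hpair⟩ := ihn
      have hney : ∀ q ∈ Ts, q.1.Nonempty := fun q hq => ⟨q.2, (hmem q hq).1⟩
      obtain ⟨j, hj1, hj2⟩ := (hfr.and_eventually (hevList Ts hney γ hγ)).exists
      refine ⟨(F j, (hne j).choose) :: Ts, by simp [hlen], ?_, ?_⟩
      · intro p hp
        rcases List.mem_cons.1 hp with rfl | hp'
        · exact ⟨(hne j).choose_spec, hj1⟩
        · exact hmem p hp'
      · exact List.Pairwise.cons (fun q hq => hj2 q hq) hpair
  -- the key eventual bound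
  have hKey : ∀ (ε : ℝ), 0 < ε → ε ≤ 1/2 → ∀ n : ℕ,
      limsup a atTop ≤ (l + ε)/(1-ε) + (1-ε/4)^n * C := by
    intro ε hε hε2 n
    set θ : ℝ := (1-ε/4)^n with hθ
    have hθpos : 0 < θ := pow_pos (by linarith) n
    set γ : ℝ := θ/(16*(n+1)) with hγdef
    have hγpos : 0 < γ := by positivity
    obtain ⟨Ts, hlen, hmem, hpair⟩ := tiles (l+ε) γ hγpos (hfreq ε hε) n
    have hney : ∀ q ∈ Ts, q.1.Nonempty := fun q hq => ⟨q.2, (hmem q hq).1⟩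
    have hev := hevList Ts hney (θ/8) (by positivity)
    refine limsup_le_of_le hbge.isCoboundedUnder_le ?_
    filter_upwards [hev] with i hi
    have hcardi := hcard i
    -- apply owRounds
    have hDDc : ∀ q ∈ Ts, (DD (F i) q.1 q.2 : ℝ)
        ≤ (θ * ((F i).card:ℝ))/4 - 2*(((F i).card:ℝ))*γ*(Ts.length : ℝ) := by
      intro q hq
      have h6 := hi q hq
      have h7 : 2 * ((F i).card:ℝ) * γ * (Ts.length : ℝ) ≤ θ * (F i).card / 8 := by
        rw [hlen, hγdef]
        have h1 : (0:ℝ) < 16*((n:ℝ)+1) := by positivity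
        have hkey : 2 * ((F i).card:ℝ) * (θ/(16*((n:ℝ)+1))) * (n:ℝ)
            = (2*((F i).card:ℝ)*θ*(n:ℝ)) / (16*((n:ℝ)+1)) := by ring
        rw [hkey, div_le_div_iff₀ h1 (by norm_num : (0:ℝ) < 8)]
        have hcn : (0:ℝ) ≤ (n:ℝ) := Nat.cast_nonneg _
        nlinarith [hcardi, hθpos]
      have h8 : (θ * ((F i).card:ℝ))/4 = θ * (F i).card/8 + θ * (F i).card/8 := by ring
      calc (DD (F i) q.1 q.2 : ℝ) ≤ θ/8 * (F i).card := h6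
        _ ≤ (θ * ((F i).card:ℝ))/4 - 2*(((F i).card:ℝ))*γ*(Ts.length : ℝ) := by
            rw [h8]; have := h7; linarith [mul_comm (θ/8) ((F i).card:ℝ)]
    obtain ⟨R'', hsub'', hφ'', hcard''⟩ := owRounds φ hφmono hφsub hφinv ε (l+ε)
      ((F i).card : ℝ) (θ * (F i).card) γ hε hε2 (by linarith)
      (by positivity) (le_of_lt hγpos) Ts hmem hpair (F i) le_rfl hDDc
    have hmax : max (θ * ((F i).card:ℝ)) ((1-ε/4)^(Ts.length) * (F i).card)
        = θ * (F i).card := by rw [hlen, ← hθ, max_self]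
    rw [hmax] at hcard''
    have hφR'' : φ R'' ≤ θ * (F i).card * C := by
      calc φ R'' ≤ R''.card * C := hφC _
        _ ≤ θ * (F i).card * C := mul_le_mul_of_nonneg_right hcard'' hC
    have h3 : φ (F i) ≤ (l+ε)/(1-ε) * (F i).card + θ * (F i).card * C := by
      have h4 : 0 ≤ (l+ε)/(1-ε) := div_nonneg (by linarith) (by linarith)
      have h5 : ((R''.card : ℝ)) ≥ 0 := Nat.cast_nonneg _
      calc φ (F i) ≤ (l+ε)/(1-ε) * (((F i).card : ℝ) - R''.card) + φ R'' := hφ''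
        _ ≤ (l+ε)/(1-ε) * (F i).card + φ R'' := by nlinarith
        _ ≤ _ := by linarith
    rw [ha]
    rw [div_le_iff₀ hcardi]
    calc φ (F i) ≤ (l+ε)/(1-ε) * (F i).card + θ * (F i).card * C := h3
      _ = ((l + ε)/(1-ε) + θ * C) * (F i).card := by ring
  -- conclude limsup ≤ liminf
  have hLl : limsup a atTop ≤ l := by
    have hstep : ∀ (ε : ℝ), 0 < ε → ε ≤ 1/2 → limsup a atTop ≤ (l + ε)/(1-ε) := by
      intro ε hε hε2
      have htend : Tendsto (fun n : ℕ => (l + ε)/(1-ε) + (1-ε/4)^n * C) atTop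
          (nhds ((l + ε)/(1-ε) + 0 * C)) := by
        apply Tendsto.add tendsto_const_nhds
        exact (tendsto_pow_atTop_nhds_zero_of_lt_one (by linarith) (by linarith)).mul_const C
      rw [zero_mul, add_zero] at htend
      exact ge_of_tendsto htend (Eventually.of_forall fun n => hKey ε hε hε2 n)
    have hLC : limsup a atTop ≤ C :=
      limsup_le_of_le hbge.isCoboundedUnder_le (Eventually.of_forall hCa)
    refine le_of_forall_pos_le_add ?_
    intro ε' hε'
    have h1C : (0:ℝ) < 1 + C := by linarith
    set ε : ℝ := min (1/2) (ε'/(1+C)) with hεdef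
    have hεpos : 0 < ε := lt_min (by norm_num) (div_pos hε' h1C)
    have hεle : ε ≤ 1/2 := min_le_left _ _
    have h2 := hstep ε hεpos hεle
    have h3 : (0:ℝ) < 1 - ε := by
      have : ε ≤ 1/2 := hεle
      linarith
    have h4 : limsup a atTop * (1 - ε) ≤ l + ε := (le_div_iff₀ h3).1 h2
    have h5 : ε * (1 + C) ≤ ε' := by
      calc ε * (1 + C) ≤ (ε'/(1+C)) * (1 + C) :=
            mul_le_mul_of_nonneg_right (min_le_right _ _) (le_of_lt h1C)
        _ = ε' := by field_simp
    nlinarith [h4, mul_le_mul_of_nonneg_left hLC (le_of_lt hεpos), h5]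
  refine ⟨l, hl0, ?_⟩
  have heq : limsup a atTop = l := le_antisymm hLl (liminf_le_limsup hble hbge)
  exact tendsto_of_liminf_eq_limsup hl.symm heq hble hbge

variable {M : Type*} [AddCommMonoid M]
  (v : M → ℝ) (α : G → M →+ M)
  (hv0 : ∀ m, 0 ≤ v m)
  (hvmono : ∀ x y : M, v x ≤ v (x + y))
  (hvsub : ∀ x y : M, v (x + y) ≤ v x + v y)
  (hα1 : α 1 = AddMonoidHom.id M)
  (hαmul : ∀ g h : G, α (g * h) = (α g).comp (α h))
  (hαv : ∀ g m, v (α g m) ≤ v m)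

include hαv hα1 hαmul in
lemma vα_eq (g : G) (m : M) : v (α g m) = v m := by
  refine le_antisymm (hαv g m) ?_
  have h1 : α g⁻¹ (α g m) = m := by
    have h2 : (α g⁻¹).comp (α g) = α (g⁻¹ * g) := (hαmul g⁻¹ g).symm
    have h3 : α (g⁻¹ * g) m = m := by rw [inv_mul_cancel, hα1]; rfl
    calc α g⁻¹ (α g m) = ((α g⁻¹).comp (α g)) m := rfl
      _ = α (g⁻¹ * g) m := by rw [h2]
      _ = m := h3
  calc v m = v (α g⁻¹ (α g m)) := by rw [h1]
    _ ≤ v (α g m) := hαv _ _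

include hv0 hvsub hαv in
lemma vT_le (m : M) : ∀ A : Finset G, A.Nonempty → v (entT α A m) ≤ A.card * v m := by
  intro A hA
  induction hA using Finset.Nonempty.cons_induction with
  | singleton a => simpa [entT] using hαv a m
  | cons a A ha hA ih =>
    rw [entT, Finset.sum_cons]
    calc v (α a m + ∑ f ∈ A, α f m) ≤ v (α a m) + v (∑ f ∈ A, α f m) := hvsub _ _
      _ ≤ v m + A.card * v m := add_le_add (hαv a m) ih
      _ = (Finset.cons a A ha).card * v m := by
          rw [Finset.card_cons]; push_cast; ring

/-- The scaled norm function on finite subsets. -/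
noncomputable def Phi (m : M) : Finset G → ℝ :=
  fun A => if A.Nonempty then v (entT α A m) else 0

include hv0 hvmono hvsub hα1 hαmul hαv in
lemma sysMaster {I : Type*} [Preorder I] [IsDirected I (· ≤ ·)] [Nonempty I]
    (F : I → Finset G) (hne : ∀ i, (F i).Nonempty)
    (hFol : ∀ g : G, Tendsto
      (fun i => ((((F i).image (· * g)) \ F i).card : ℝ) / ((F i).card : ℝ)) atTop (nhds 0)) :
    ∀ m : M, ∃ L : ℝ, 0 ≤ L ∧
      Tendsto (fun i => v (entT α (F i) m) / ((F i).card : ℝ)) atTop (nhds L) := by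
  intro m
  have hPhi0 : ∀ A : Finset G, 0 ≤ Phi v α m A := by
    intro A
    unfold Phi
    split
    · exact hv0 _
    · exact le_refl 0
  have hPhiC : ∀ A : Finset G, Phi v α m A ≤ A.card * v m := by
    intro A
    unfold Phi
    split
    · exact vT_le v α hv0 hvsub hαv m A ‹_›
    · exact mul_nonneg (Nat.cast_nonneg _) (hv0 m)
  have hPhimono : ∀ A B : Finset G, A ⊆ B → Phi v α m A ≤ Phi v α m B := by
    intro A B hAB
    rcases A.eq_empty_or_nonempty with rfl | hA
    · simpa [Phi] using hPhi0 B
    · have hB : B.Nonempty := hA.mono hAB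
      unfold Phi
      rw [if_pos hA, if_pos hB]
      have hsum : entT α A m + entT α (B \ A) m = entT α B m := by
        unfold entT
        rw [add_comm]
        exact Finset.sum_sdiff hAB
      calc v (entT α A m) ≤ v (entT α A m + entT α (B \ A) m) := hvmono _ _
        _ = v (entT α B m) := by rw [hsum]
  have hPhisub : ∀ A B : Finset G, Phi v α m (A ∪ B) ≤ Phi v α m A + Phi v α m B := by
    intro A B
    rcases A.eq_empty_or_nonempty with rfl | hA
    · simp only [Finset.empty_union]
      simpa [Phi] using hPhi0 B
    rcases B.eq_empty_or_nonempty with rfl | hB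
    · simp only [Finset.union_empty]
      have := hPhi0 A
      simp [Phi]
    · have hAB : (A ∪ B).Nonempty := hA.mono Finset.subset_union_left
      unfold Phi
      rw [if_pos hA, if_pos hB, if_pos hAB]
      have hsum : entT α (A ∪ B) m + entT α (A ∩ B) m = entT α A m + entT α B m :=
        Finset.sum_union_inter
      calc v (entT α (A ∪ B) m) ≤ v (entT α (A ∪ B) m + entT α (A ∩ B) m) := hvmono _ _
        _ = v (entT α A m + entT α B m) := by rw [hsum]
        _ ≤ v (entT α A m) + v (entT α B m) := hvsub _ _
  have hPhiinv : ∀ (g : G) (A : Finset G), Phi v α m (lT g A) = Phi v α m A := by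
    intro g A
    rcases A.eq_empty_or_nonempty with rfl | hA
    · simp [Phi, lT]
    · have hgA : (lT g A).Nonempty := by
        unfold lT
        exact hA.image _
      unfold Phi
      rw [if_pos hA, if_pos hgA]
      have hT : entT α (lT g A) m = α g (entT α A m) := by
        unfold entT lT
        rw [Finset.sum_image (fun x _ y _ h => mul_right_injective g h)]
        rw [map_sum]
        refine Finset.sum_congr rfl fun f _ => ?_
        rw [hαmul]
        rfl
      rw [hT, vα_eq v α hα1 hαmul hαv]
  obtain ⟨L, hL0, hLt⟩ := owMaster F hne hFol (Phi v α m) (v m) (hv0 m)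
    hPhi0 hPhiC hPhimono hPhisub hPhiinv
  refine ⟨L, hL0, ?_⟩
  have heq : (fun i => Phi v α m (F i) / ((F i).card : ℝ))
      = fun i => v (entT α (F i) m) / ((F i).card : ℝ) := by
    funext i
    rw [Phi, if_pos (hne i)]
  rwa [heq] at hLt

end OWMachinery

set_option maxHeartbeats 1000000 in
/-- Weak Addition Theorem: for a group `G` with a right Følner net `𝔰 = {F i}` and left
`G`-actions `α₁, α₂` by norm-nonincreasing endomorphisms on normed commutative monoids
`(M₁, v₁)`, `(M₂, v₂)` with monotone subadditive norms, the coproduct action `α₁ ⊕ α₂` on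
`M₁ ⊕ M₂` with norm `(v₁ ⊕ v₂)(x, y) = v₁(x) + v₂(y)` satisfies
`h(α₁ ⊕ α₂, 𝔰) = h(α₁, 𝔰) + h(α₂, 𝔰)`. -/
theorem stmt19 {G M₁ M₂ I : Type*} [Group G] [DecidableEq G]
    [AddCommMonoid M₁] [AddCommMonoid M₂]
    [Preorder I] [IsDirected I (· ≤ ·)] [Nonempty I]
    (F : I → Finset G) (hne : ∀ i, (F i).Nonempty)
    (hFol : ∀ g : G, Tendsto
      (fun i => ((((F i).image (· * g)) \ F i).card : ℝ) / ((F i).card : ℝ)) atTop (nhds 0))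
    (v₁ : M₁ → ℝ) (v₂ : M₂ → ℝ)
    (hv₁0 : ∀ m, 0 ≤ v₁ m) (hv₂0 : ∀ m, 0 ≤ v₂ m)
    (hv₁mono : ∀ x y : M₁, v₁ x ≤ v₁ (x + y))
    (hv₂mono : ∀ x y : M₂, v₂ x ≤ v₂ (x + y))
    (hv₁sub : ∀ x y : M₁, v₁ (x + y) ≤ v₁ x + v₁ y)
    (hv₂sub : ∀ x y : M₂, v₂ (x + y) ≤ v₂ x + v₂ y)
    (α₁ : G → M₁ →+ M₁) (α₂ : G → M₂ →+ M₂)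
    (hα₁1 : α₁ 1 = AddMonoidHom.id M₁) (hα₂1 : α₂ 1 = AddMonoidHom.id M₂)
    (hα₁mul : ∀ g h : G, α₁ (g * h) = (α₁ g).comp (α₁ h))
    (hα₂mul : ∀ g h : G, α₂ (g * h) = (α₂ g).comp (α₂ h))
    (hα₁v : ∀ g m, v₁ (α₁ g m) ≤ v₁ m)
    (hα₂v : ∀ g m, v₂ (α₂ g m) ≤ v₂ m) :
    enth (fun g => (α₁ g).prodMap (α₂ g)) (fun p => v₁ p.1 + v₂ p.2) F
      = enth α₁ v₁ F + enth α₂ v₂ F := by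
  haveI : NeBot (atTop : Filter I) := atTop_neBot_iff.2 ⟨‹_›, ‹_›⟩
  haveI : Nonempty M₁ := ⟨0⟩
  haveI : Nonempty M₂ := ⟨0⟩
  set vp : M₁ × M₂ → ℝ := fun p => v₁ p.1 + v₂ p.2 with hvp
  set αp : G → (M₁ × M₂) →+ (M₁ × M₂) := fun g => (α₁ g).prodMap (α₂ g) with hαp
  -- hypotheses for the product system
  have hvp0 : ∀ p, 0 ≤ vp p := fun p => add_nonneg (hv₁0 _) (hv₂0 _)
  have hvpmono : ∀ x y : M₁ × M₂, vp x ≤ vp (x + y) := by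
    intro x y
    exact add_le_add (hv₁mono x.1 y.1) (hv₂mono x.2 y.2)
  have hvpsub : ∀ x y : M₁ × M₂, vp (x + y) ≤ vp x + vp y := by
    intro x y
    have := add_le_add (hv₁sub x.1 y.1) (hv₂sub x.2 y.2)
    calc vp (x + y) = v₁ (x.1 + y.1) + v₂ (x.2 + y.2) := rfl
      _ ≤ (v₁ x.1 + v₁ y.1) + (v₂ x.2 + v₂ y.2) := this
      _ = vp x + vp y := by simp [hvp]; ring
  have hαp1 : αp 1 = AddMonoidHom.id (M₁ × M₂) := by
    refine AddMonoidHom.ext fun p => ?_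
    have h1 : αp 1 p = (α₁ 1 p.1, α₂ 1 p.2) := rfl
    rw [h1, hα₁1, hα₂1]
    rfl
  have hαpmul : ∀ g h : G, αp (g * h) = (αp g).comp (αp h) := by
    intro g h
    refine AddMonoidHom.ext fun p => ?_
    have h1 : αp (g * h) p = (α₁ (g * h) p.1, α₂ (g * h) p.2) := rfl
    rw [h1, hα₁mul, hα₂mul]
    rfl
  have hαpv : ∀ (g : G) (p : M₁ × M₂), vp (αp g p) ≤ vp p := by
    intro g p
    exact add_le_add (hα₁v g p.1) (hα₂v g p.2)
  -- limits
  obtain ⟨L₁, hL₁⟩ := Classical.axiomOfChoice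
    (sysMaster v₁ α₁ hv₁0 hv₁mono hv₁sub hα₁1 hα₁mul hα₁v F hne hFol)
  obtain ⟨L₂, hL₂⟩ := Classical.axiomOfChoice
    (sysMaster v₂ α₂ hv₂0 hv₂mono hv₂sub hα₂1 hα₂mul hα₂v F hne hFol)
  obtain ⟨Lp, hLp⟩ := Classical.axiomOfChoice
    (sysMaster vp αp hvp0 hvpmono hvpsub hαp1 hαpmul hαpv F hne hFol)
  -- product trajectory splits
  have hTp : ∀ (i : I) (p : M₁ × M₂),
      entT αp (F i) p = (entT α₁ (F i) p.1, entT α₂ (F i) p.2) := by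
    intro i p
    unfold entT
    refine Prod.ext ?_ ?_
    · rw [Prod.fst_sum]; rfl
    · rw [Prod.snd_sum]; rfl
  have hLpeq : ∀ p : M₁ × M₂, Lp p = L₁ p.1 + L₂ p.2 := by
    intro p
    refine tendsto_nhds_unique (hLp p).2 ?_
    have heq : (fun i => vp (entT αp (F i) p) / ((F i).card : ℝ))
        = fun i => v₁ (entT α₁ (F i) p.1) / ((F i).card : ℝ)
          + v₂ (entT α₂ (F i) p.2) / ((F i).card : ℝ) := by
      funext i
      rw [hTp i p]
      show (v₁ (entT α₁ (F i) p.1) + v₂ (entT α₂ (F i) p.2)) / _ = _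
      rw [add_div]
    rw [heq]
    exact ((hL₁ p.1).2).add ((hL₂ p.2).2)
  -- entH in terms of limits
  have hentH1 : ∀ m : M₁, entH α₁ v₁ F m = ENNReal.ofReal (L₁ m) := by
    intro m
    have h1 : Tendsto (fun i => ENNReal.ofReal (v₁ (entT α₁ (F i) m) / ((F i).card : ℝ)))
        atTop (nhds (ENNReal.ofReal (L₁ m))) :=
      (ENNReal.continuous_ofReal.tendsto _).comp (hL₁ m).2
    exact h1.limsup_eq
  have hentH2 : ∀ m : M₂, entH α₂ v₂ F m = ENNReal.ofReal (L₂ m) := by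
    intro m
    have h1 : Tendsto (fun i => ENNReal.ofReal (v₂ (entT α₂ (F i) m) / ((F i).card : ℝ)))
        atTop (nhds (ENNReal.ofReal (L₂ m))) :=
      (ENNReal.continuous_ofReal.tendsto _).comp (hL₂ m).2
    exact h1.limsup_eq
  have hentHp : ∀ p : M₁ × M₂, entH αp vp F p = ENNReal.ofReal (Lp p) := by
    intro p
    have h1 : Tendsto (fun i => ENNReal.ofReal (vp (entT αp (F i) p) / ((F i).card : ℝ)))
        atTop (nhds (ENNReal.ofReal (Lp p))) :=
      (ENNReal.continuous_ofReal.tendsto _).comp (hLp p).2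
    exact h1.limsup_eq
  calc enth αp vp F
      = ⨆ p : M₁ × M₂, (ENNReal.ofReal (L₁ p.1) + ENNReal.ofReal (L₂ p.2)) := by
        unfold enth
        refine iSup_congr fun p => ?_
        rw [hentHp p, hLpeq p,
          ENNReal.ofReal_add (hL₁ p.1).1 (hL₂ p.2).1]
    _ = (⨆ m : M₁, ENNReal.ofReal (L₁ m)) + (⨆ m : M₂, ENNReal.ofReal (L₂ m)) := by
        apply le_antisymm
        · exact iSup_le fun p => add_le_add
            (le_iSup (fun m => ENNReal.ofReal (L₁ m)) p.1)
            (le_iSup (fun m => ENNReal.ofReal (L₂ m)) p.2)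
        · rw [ENNReal.iSup_add]
          refine iSup_le fun x => ?_
          rw [ENNReal.add_iSup]
          refine iSup_le fun y => ?_
          exact le_iSup_of_le (x, y) le_rfl
    _ = enth α₁ v₁ F + enth α₂ v₂ F := by
        unfold enth
        congr 1
        · exact (iSup_congr fun m => (hentH1 m).symm)
        · exact (iSup_congr fun m => (hentH2 m).symm)
end
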